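/- Covariant-stability violation of Spiegel's model: for every c > 0, the function F(χ) = χ + c·(1 − artanh(χ)/χ) on (0,1) satisfies lim_{χ→1⁻} F(χ) = −∞. Consequently, for every c > 0 there exists χ ∈ (0,1) such that, setting kτ = iχ and ωτ = −i c (1 − arctan(kτ)/(kτ)) (Spiegel's dispersion relation; note arctan(iχ) = i·artanh(χ)), one has Im(ωτ) > |Im(kτ)| while |kτ| < 1. -/

import Mathlib

/-!
Statement 12: covariant-stability violation of Spiegel's model: for every `c > 0`,
`F(χ) = χ + c(1 − artanh(χ)/χ) → −∞` as `χ → 1⁻`; consequently there exists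
`χ ∈ (0,1)` such that, with `kτ = iχ` and `ωτ = −ic(1 − arctan(kτ)/(kτ))`
(Spiegel's dispersion relation), one has `Im(ωτ) > |Im(kτ)|` while `|kτ| < 1`.
-/

noncomputable section
open Real Filter

/-- The inverse hyperbolic tangent, `artanh x = (1/2) log((1+x)/(1−x))`. -/
def artanh (x : ℝ) : ℝ := (1 / 2) * Real.log ((1 + x) / (1 - x))

lemma arctan_I_mul (χ : ℝ) (h0 : 0 < χ) (h1 : χ < 1) :
    Complex.arctan (Complex.I * (χ : ℂ)) = Complex.I * (_root_.artanh χ : ℂ) := by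
  rw [Complex.arctan]
  have hII : (Complex.I * (χ:ℂ)) * Complex.I = -(χ:ℂ) := by
    rw [mul_right_comm, Complex.I_mul_I]; ring
  rw [hII]
  have harg : ((1:ℂ) + -(χ:ℂ)) / (1 - -(χ:ℂ)) = (((1 - χ) / (1 + χ) : ℝ) : ℂ) := by
    push_cast; ring_nf
  rw [harg, ← Complex.ofReal_log (div_nonneg (by linarith) (by linarith))]
  have hlog : Real.log ((1 - χ) / (1 + χ)) = -Real.log ((1 + χ) / (1 - χ)) := by
    rw [← Real.log_inv, inv_div]
  rw [hlog, _root_.artanh]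
  push_cast
  ring

theorem spiegel_covariant_instability (c : ℝ) (hc : 0 < c) :
    Tendsto (fun χ : ℝ => χ + c * (1 - _root_.artanh χ / χ))
      (nhdsWithin 1 (Set.Iio 1)) atBot ∧
    ∃ χ ∈ Set.Ioo (0 : ℝ) 1,
      (-Complex.I * (c : ℂ) * (1 - Complex.arctan (Complex.I * (χ : ℂ)) /
          (Complex.I * (χ : ℂ)))).im > |(Complex.I * (χ : ℂ)).im| ∧
      ‖Complex.I * (χ : ℂ)‖ < 1 := by
  have hsub : Tendsto (fun χ : ℝ => 1 - χ) (nhdsWithin 1 (Set.Iio 1)) (nhdsWithin 0 (Set.Ioi 0)) := by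
    apply tendsto_nhdsWithin_of_tendsto_nhds_of_eventually_within
    · have : Tendsto (fun χ : ℝ => 1 - χ) (nhds 1) (nhds 0) := by
        have h := ((continuous_const.sub continuous_id) : Continuous fun χ : ℝ => 1 - χ).tendsto 1
        norm_num at h
        exact h
      exact this.mono_left nhdsWithin_le_nhds
    · filter_upwards [self_mem_nhdsWithin] with x hx
      simpa using sub_pos.mpr (Set.mem_Iio.mp hx)
  have hinv : Tendsto (fun χ : ℝ => (1 - χ)⁻¹) (nhdsWithin 1 (Set.Iio 1)) atTop :=
    tendsto_inv_nhdsGT_zero.comp hsub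
  have hnum : Tendsto (fun χ : ℝ => 1 + χ) (nhdsWithin 1 (Set.Iio 1)) (nhds 2) := by
    have : Tendsto (fun χ : ℝ => 1 + χ) (nhds 1) (nhds 2) := by
      have h := ((continuous_const.add continuous_id) : Continuous fun χ : ℝ => 1 + χ).tendsto 1
      norm_num [one_add_one_eq_two] at h
      exact h
    exact this.mono_left nhdsWithin_le_nhds
  have hfrac : Tendsto (fun χ : ℝ => (1 + χ) / (1 - χ)) (nhdsWithin 1 (Set.Iio 1)) atTop := by
    simpa [div_eq_mul_inv] using hnum.pos_mul_atTop (by norm_num) hinv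
  have hlog : Tendsto (fun χ : ℝ => Real.log ((1 + χ) / (1 - χ)))
      (nhdsWithin 1 (Set.Iio 1)) atTop := Real.tendsto_log_atTop.comp hfrac
  have hartanh : Tendsto (fun χ : ℝ => _root_.artanh χ) (nhdsWithin 1 (Set.Iio 1)) atTop := by
    unfold _root_.artanh
    exact hlog.const_mul_atTop (by norm_num)
  have hinvχ : Tendsto (fun χ : ℝ => χ⁻¹) (nhdsWithin 1 (Set.Iio 1)) (nhds 1) := by
    have h := (continuousAt_inv₀ (x := (1:ℝ)) one_ne_zero).tendsto
    rw [inv_one] at h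
    exact h.mono_left nhdsWithin_le_nhds
  have hratio : Tendsto (fun χ : ℝ => _root_.artanh χ / χ) (nhdsWithin 1 (Set.Iio 1)) atTop := by
    simpa [div_eq_mul_inv] using hartanh.atTop_mul_pos one_pos hinvχ
  have hcm : Tendsto (fun χ : ℝ => c * (_root_.artanh χ / χ)) (nhdsWithin 1 (Set.Iio 1)) atTop :=
    hratio.const_mul_atTop hc
  have hneg : Tendsto (fun χ : ℝ => -(c * (_root_.artanh χ / χ))) (nhdsWithin 1 (Set.Iio 1)) atBot :=
    tendsto_neg_atTop_atBot.comp hcm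
  have hF : Tendsto (fun χ : ℝ => χ + c * (1 - _root_.artanh χ / χ))
      (nhdsWithin 1 (Set.Iio 1)) atBot := by
    have h := tendsto_atBot_add_left_of_ge' (l := nhdsWithin (1:ℝ) (Set.Iio 1))
      (f := fun χ : ℝ => χ + c) (1 + c)
      (by filter_upwards [self_mem_nhdsWithin] with x hx
          exact add_le_add_left (le_of_lt hx) c) hneg
    have heq : (fun χ : ℝ => (χ + c) + -(c * (_root_.artanh χ / χ)))
        = fun χ : ℝ => χ + c * (1 - _root_.artanh χ / χ) := by
      funext χ; ring
    rwa [heq] at h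
  refine ⟨hF, ?_⟩
  have hev : ∀ᶠ χ in nhdsWithin (1:ℝ) (Set.Iio 1),
      χ + c * (1 - _root_.artanh χ / χ) < 0 := hF.eventually_lt_atBot 0
  have hev2 : ∀ᶠ χ in nhdsWithin (1:ℝ) (Set.Iio 1), χ ∈ Set.Ioo (0:ℝ) 1 := by
    filter_upwards [self_mem_nhdsWithin,
      ((eventually_gt_nhds one_pos).filter_mono nhdsWithin_le_nhds)] with x hx hx0
    exact ⟨hx0, hx⟩
  obtain ⟨χ, hχF, hχ0, hχ1⟩ := (hev.and hev2).exists
  refine ⟨χ, ⟨hχ0, hχ1⟩, ?_, ?_⟩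
  · rw [arctan_I_mul χ hχ0 hχ1]
    have hdiv : (Complex.I * (_root_.artanh χ : ℂ)) / (Complex.I * (χ : ℂ))
        = ((_root_.artanh χ / χ : ℝ) : ℂ) := by
      rw [mul_div_mul_left _ _ Complex.I_ne_zero]
      push_cast
      ring
    rw [hdiv]
    have him : (-Complex.I * (c : ℂ) * (1 - ((_root_.artanh χ / χ : ℝ) : ℂ))).im
        = -(c * (1 - _root_.artanh χ / χ)) := by
      have : (-Complex.I * (c : ℂ) * (1 - ((_root_.artanh χ / χ : ℝ) : ℂ)))
          = -((c * (1 - _root_.artanh χ / χ) : ℝ) : ℂ) * Complex.I := by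
        push_cast; ring
      rw [this]
      simp
    rw [him]
    have : |(Complex.I * (χ : ℂ)).im| = χ := by
      simp [abs_of_pos hχ0]
    rw [this]
    linarith
  · have : ‖Complex.I * (χ : ℂ)‖ = |χ| := by
      simp
    rw [this, abs_of_pos hχ0]
    exact hχ1
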